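/- The population version of the equal opportunity transfer bound: for any g in a symmetric hypothesis space H and any g* ∈ H, Δ_{EOp,T}(g) − Δ_{EOp,S}(g) ≤ (1/2)d_{HΔH}(D_{T_0^0}, D_{S_0^0}) + (1/2)d_{HΔH}(D_{T_1^0}, D_{S_1^0}) + ε_{S_0^0}(g*,f) + ε_{T_0^0}(g*,f) + ε_{S_1^0}(g*,f) + ε_{T_1^0}(g*,f). In particular, when f ≡ 0 on all four distributions and g* ≡ 0 is in H, Δ_{EOp,T}(g) ≤ Δ_{EOp,S}(g) + (1/2)d_{HΔH}(D_{T_0^0}, D_{S_0^0}) + (1/2)d_{HΔH}(D_{T_1^0}, D_{S_1^0}). -/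

import Mathlib

/-!
With `f = 0` almost everywhere, `E_D[g] = ε_D(g, f)`, so each of the two group means moves from
`S` to `T` by at most the Ben-David bound `½ d_{HΔH} + ε_S(g*, f) + ε_T(g*, f)`; the reverse
triangle inequality `|a - b| - |c - d| ≤ |a - c| + |b - d|` then adds the two groups.
-/

open MeasureTheory

/-- Disagreement error `ε_D(h,h') = E_{z∼D}[|h z − h' z|]`. -/
noncomputable def errE {Z : Type*} [MeasurableSpace Z] (μ : Measure Z) (h h' : Z → ℝ) : ℝ :=
  ∫ z, |h z - h' z| ∂μ

/-- `d_{HΔH}(D,D') = 2 sup_{h,h'∈H} |Pr_D[h≠h'] − Pr_{D'}[h≠h']|`. -/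
noncomputable def dHH {Z : Type*} [MeasurableSpace Z] (H : Set (Z → ℝ))
    (μ ν : Measure Z) : ℝ :=
  2 * ⨆ p : H × H,
    |(μ {z | p.1.1 z ≠ p.2.1 z}).toReal - (ν {z | p.1.1 z ≠ p.2.1 z}).toReal|

/-- Equal opportunity distance `Δ_{EOp,D}(g) = |E_{D_0^0}[g] − E_{D_1^0}[g]|`. -/
noncomputable def eopDiff {Z : Type*} [MeasurableSpace Z] (μ0 μ1 : Measure Z)
    (g : Z → ℝ) : ℝ :=
  |(∫ z, g z ∂μ0) - ∫ z, g z ∂μ1|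

section Disagreement

variable {Z : Type*} [MeasurableSpace Z] {μ : Measure Z}

lemma integrable_of_forall_eq_zero_or_eq_one [IsFiniteMeasure μ] {h : Z → ℝ}
    (hm : Measurable h) (hb : ∀ z, h z = 0 ∨ h z = 1) : Integrable h μ :=
  .of_bound hm.aestronglyMeasurable 1 <| .of_forall fun z => by
    rcases hb z with hz | hz <;> simp [hz]

lemma errE_comm (h h' : Z → ℝ) : errE μ h h' = errE μ h' h := by
  simp only [errE, abs_sub_comm]

lemma errE_triangle {h₁ h₂ h₃ : Z → ℝ} (hi₁ : Integrable h₁ μ) (hi₂ : Integrable h₂ μ)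
    (hi₃ : Integrable h₃ μ) : errE μ h₁ h₃ ≤ errE μ h₁ h₂ + errE μ h₂ h₃ := by
  have hi₁₂ : Integrable (fun z => |h₁ z - h₂ z|) μ := (hi₁.sub hi₂).abs
  have hi₂₃ : Integrable (fun z => |h₂ z - h₃ z|) μ := (hi₂.sub hi₃).abs
  calc errE μ h₁ h₃ ≤ ∫ z, (|h₁ z - h₂ z| + |h₂ z - h₃ z|) ∂μ :=
        integral_mono (hi₁.sub hi₃).abs (hi₁₂.add hi₂₃) fun z => abs_sub_le _ _ _
    _ = errE μ h₁ h₂ + errE μ h₂ h₃ := integral_add hi₁₂ hi₂₃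

lemma errE_eq_measure_ne {h h' : Z → ℝ} (hm : Measurable h) (hm' : Measurable h')
    (hb : ∀ z, h z = 0 ∨ h z = 1) (hb' : ∀ z, h' z = 0 ∨ h' z = 1) :
    errE μ h h' = (μ {z | h z ≠ h' z}).toReal := by
  have hind : (fun z => |h z - h' z|) = {z | h z ≠ h' z}.indicator 1 := by
    funext z
    by_cases hz : h z = h' z
    · simp [hz]
    · rw [Set.indicator_of_mem hz]
      rcases hb z with h0 | h1 <;> rcases hb' z with h0' | h1' <;> simp_all
  rw [errE, hind]
  exact (integral_indicator_one (measurableSet_eq_fun hm hm').compl).trans (measureReal_def _ _)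

lemma errE_eq_integral_of_ae_eq_zero {h f : Z → ℝ} (hf : f =ᵐ[μ] fun _ => 0)
    (hnn : ∀ z, 0 ≤ h z) : errE μ h f = ∫ z, h z ∂μ :=
  integral_congr_ae <| hf.mono fun z hz => by simp [hz, abs_of_nonneg (hnn z)]

end Disagreement

section HDeltaH

variable {Z : Type*} [MeasurableSpace Z] (H : Set (Z → ℝ)) (μ ν : Measure Z)

lemma dHH_comm : dHH H μ ν = dHH H ν μ := by
  simp only [dHH, abs_sub_comm]

lemma abs_measure_ne_sub_le_dHH [IsFiniteMeasure μ] [IsFiniteMeasure ν] {h h' : Z → ℝ}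
    (hh : h ∈ H) (hh' : h' ∈ H) :
    |(μ {z | h z ≠ h' z}).toReal - (ν {z | h z ≠ h' z}).toReal| ≤ (1 / 2) * dHH H μ ν := by
  have hbdd : BddAbove (Set.range fun p : H × H =>
      |(μ {z | p.1.1 z ≠ p.2.1 z}).toReal - (ν {z | p.1.1 z ≠ p.2.1 z}).toReal|) := by
    refine ⟨μ.real Set.univ + ν.real Set.univ, ?_⟩
    rintro _ ⟨p, rfl⟩
    simp only [← measureReal_def]
    calc _ ≤ |μ.real {z | p.1.1 z ≠ p.2.1 z}| + |ν.real {z | p.1.1 z ≠ p.2.1 z}| := abs_sub _ _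
      _ ≤ _ := by
        simp only [abs_of_nonneg measureReal_nonneg]
        exact add_le_add (measureReal_mono (Set.subset_univ _))
          (measureReal_mono (Set.subset_univ _))
  have := le_ciSup hbdd ⟨⟨h, hh⟩, ⟨h', hh'⟩⟩
  rw [dHH]
  linarith

end HDeltaH

section DomainAdaptation

variable {Z : Type*} [MeasurableSpace Z] {H : Set (Z → ℝ)}

/-- The Ben-David et al. domain adaptation bound for a binary hypothesis class. -/
theorem errE_le_errE_add_dHH (hbin : ∀ h ∈ H, ∀ z, h z = 0 ∨ h z = 1)
    (hmeas : ∀ h ∈ H, Measurable h) (μ ν : Measure Z) [IsFiniteMeasure μ] [IsFiniteMeasure ν]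
    {f : Z → ℝ} (hfμ : Integrable f μ) (hfν : Integrable f ν) {g gs : Z → ℝ} (hg : g ∈ H)
    (hgs : gs ∈ H) :
    errE μ g f ≤ errE ν g f + (1 / 2) * dHH H μ ν + errE μ gs f + errE ν gs f := by
  have hint : ∀ (ρ : Measure Z) [IsFiniteMeasure ρ], ∀ h ∈ H, Integrable h ρ :=
    fun ρ _ h hh => integrable_of_forall_eq_zero_or_eq_one (hmeas h hh) (hbin h hh)
  have hdis : ∀ ρ : Measure Z, errE ρ g gs = (ρ {z | g z ≠ gs z}).toReal :=
    fun ρ => errE_eq_measure_ne (hmeas g hg) (hmeas gs hgs) (hbin g hg) (hbin gs hgs)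
  have hshift := (abs_le.mp (abs_measure_ne_sub_le_dHH H μ ν hg hgs)).2
  calc errE μ g f ≤ errE μ g gs + errE μ gs f :=
        errE_triangle (hint μ g hg) (hint μ gs hgs) hfμ
    _ ≤ errE ν g gs + (1 / 2) * dHH H μ ν + errE μ gs f := by rw [hdis, hdis]; linarith
    _ ≤ errE ν g f + errE ν f gs + (1 / 2) * dHH H μ ν + errE μ gs f := by
        gcongr
        exact errE_triangle (hint ν g hg) hfν (hint ν gs hgs)
    _ = _ := by rw [errE_comm f gs]; ring

theorem abs_integral_sub_le_dHH (hbin : ∀ h ∈ H, ∀ z, h z = 0 ∨ h z = 1)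
    (hmeas : ∀ h ∈ H, Measurable h) (μ ν : Measure Z) [IsFiniteMeasure μ] [IsFiniteMeasure ν]
    {f : Z → ℝ} (hfμ : f =ᵐ[μ] fun _ => 0) (hfν : f =ᵐ[ν] fun _ => 0) {g gs : Z → ℝ}
    (hg : g ∈ H) (hgs : gs ∈ H) :
    |(∫ z, g z ∂μ) - ∫ z, g z ∂ν| ≤ (1 / 2) * dHH H μ ν + errE μ gs f + errE ν gs f := by
  have hmean : ∀ ρ : Measure Z, f =ᵐ[ρ] (fun _ => 0) → errE ρ g f = ∫ z, g z ∂ρ :=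
    fun ρ hf => errE_eq_integral_of_ae_eq_zero hf fun z => by
      rcases hbin g hg z with h | h <;> simp [h]
  have hfμ' : Integrable f μ := (integrable_zero _ _ _).congr hfμ.symm
  have hfν' : Integrable f ν := (integrable_zero _ _ _).congr hfν.symm
  have hμ := errE_le_errE_add_dHH hbin hmeas μ ν hfμ' hfν' hg hgs
  have hν := errE_le_errE_add_dHH hbin hmeas ν μ hfν' hfμ' hg hgs
  rw [hmean μ hfμ, hmean ν hfν] at hμ hν
  rw [dHH_comm H ν μ] at hν
  rw [abs_sub_le_iff]
  constructor <;> linarith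

end DomainAdaptation

lemma abs_sub_sub_abs_sub_le {G : Type*} [AddCommGroup G] [LinearOrder G] [IsOrderedAddMonoid G]
    (a b c d : G) : |a - b| - |c - d| ≤ |a - c| + |b - d| :=
  calc |a - b| - |c - d| ≤ |(a - b) - (c - d)| := abs_sub_abs_le_abs_sub _ _
    _ = |(a - c) - (b - d)| := by rw [sub_sub_sub_comm]
    _ ≤ |a - c| + |b - d| := abs_sub _ _

theorem stmt15_general {Z : Type*} [MeasurableSpace Z] (H : Set (Z → ℝ))
    (hbin : ∀ h ∈ H, ∀ z, h z = 0 ∨ h z = 1)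
    (hmeas : ∀ h ∈ H, Measurable h)
    (μS0 μS1 μT0 μT1 : Measure Z)
    [IsProbabilityMeasure μS0] [IsProbabilityMeasure μS1]
    [IsProbabilityMeasure μT0] [IsProbabilityMeasure μT1]
    (f : Z → ℝ)
    (hfS0 : f =ᵐ[μS0] fun _ => 0) (hfS1 : f =ᵐ[μS1] fun _ => 0)
    (hfT0 : f =ᵐ[μT0] fun _ => 0) (hfT1 : f =ᵐ[μT1] fun _ => 0)
    (g : Z → ℝ) (hg : g ∈ H) :
    (∀ gs ∈ H,
      eopDiff μT0 μT1 g - eopDiff μS0 μS1 g ≤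
        (1 / 2) * dHH H μT0 μS0 + (1 / 2) * dHH H μT1 μS1 +
          errE μS0 gs f + errE μT0 gs f + errE μS1 gs f + errE μT1 gs f) ∧
    ((fun _ : Z => (0 : ℝ)) ∈ H →
      eopDiff μT0 μT1 g ≤
        eopDiff μS0 μS1 g + (1 / 2) * dHH H μT0 μS0 + (1 / 2) * dHH H μT1 μS1) := by
  have main : ∀ gs ∈ H,
      eopDiff μT0 μT1 g - eopDiff μS0 μS1 g ≤
        (1 / 2) * dHH H μT0 μS0 + (1 / 2) * dHH H μT1 μS1 +
          errE μS0 gs f + errE μT0 gs f + errE μS1 gs f + errE μT1 gs f := by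
    intro gs hgs
    have hgroup0 := abs_integral_sub_le_dHH hbin hmeas μT0 μS0 hfT0 hfS0 hg hgs
    have hgroup1 := abs_integral_sub_le_dHH hbin hmeas μT1 μS1 hfT1 hfS1 hg hgs
    have hrev := abs_sub_sub_abs_sub_le (∫ z, g z ∂μT0) (∫ z, g z ∂μT1) (∫ z, g z ∂μS0)
      (∫ z, g z ∂μS1)
    unfold eopDiff
    linarith
  refine ⟨main, fun hzeroH => ?_⟩
  have hzero : ∀ ρ : Measure Z, f =ᵐ[ρ] (fun _ => 0) → errE ρ (fun _ => 0) f = 0 :=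
    fun ρ hf => by rw [errE_eq_integral_of_ae_eq_zero hf fun _ => le_rfl, integral_zero]
  have hbound := main _ hzeroH
  rw [hzero μS0 hfS0, hzero μS1 hfS1, hzero μT0 hfT0, hzero μT1 hfT1] at hbound
  linarith

theorem stmt15 {Z : Type*} [MeasurableSpace Z] (H : Set (Z → ℝ))
    (hbin : ∀ h ∈ H, ∀ z, h z = 0 ∨ h z = 1)
    (hmeas : ∀ h ∈ H, Measurable h)
    (hsym : ∀ h ∈ H, (fun z => 1 - h z) ∈ H)
    (μS0 μS1 μT0 μT1 : Measure Z)
    [IsProbabilityMeasure μS0] [IsProbabilityMeasure μS1]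
    [IsProbabilityMeasure μT0] [IsProbabilityMeasure μT1]
    (f : Z → ℝ)
    (hfS0 : f =ᵐ[μS0] fun _ => 0) (hfS1 : f =ᵐ[μS1] fun _ => 0)
    (hfT0 : f =ᵐ[μT0] fun _ => 0) (hfT1 : f =ᵐ[μT1] fun _ => 0)
    (g : Z → ℝ) (hg : g ∈ H) :
    (∀ gs ∈ H,
      eopDiff μT0 μT1 g - eopDiff μS0 μS1 g ≤
        (1 / 2) * dHH H μT0 μS0 + (1 / 2) * dHH H μT1 μS1 +
          errE μS0 gs f + errE μT0 gs f + errE μS1 gs f + errE μT1 gs f) ∧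
    ((fun _ : Z => (0 : ℝ)) ∈ H →
      eopDiff μT0 μT1 g ≤
        eopDiff μS0 μS1 g + (1 / 2) * dHH H μT0 μS0 + (1 / 2) * dHH H μT1 μS1) :=
  stmt15_general H hbin hmeas μS0 μS1 μT0 μT1 f hfS0 hfS1 hfT0 hfT1 g hg
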